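/- One has −c_1^0 − ∑_{i=1}^{2k+1} b_2^i + c_2^0 > 0, where c_1^0 = (l·(m*)²/D)·I(2k+2, 2(2k+1)l+2), b_2^i = (m*/D)·((2k+1)!/P(2k+1))·(P(i)/i!)·I(2i, 2(k+1)l+2), and c_2^0 = (1/D)·((2k+1)!/P(2k+1))·P(0)·I(2k+2, 2). -/

import Mathlib

/-- The critical value m* = ∏_{j=0}^{k} (2j+1)/(2jl+1). -/
noncomputable def mStar (l k : ℕ) : ℝ :=
  ∏ j ∈ Finset.range (k + 1), (2 * (j : ℝ) + 1) / (2 * (j : ℝ) * (l : ℝ) + 1)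

/-- D = 2(2k+1)l + 2. -/
noncomputable def Dd (l k : ℕ) : ℝ := 2 * (2 * (k : ℝ) + 1) * (l : ℝ) + 2

/-- P(i) = ∏_{j=0}^{i-1} (jl + 1), with P(0) = 1. -/
noncomputable def Pp (l i : ℕ) : ℝ := ∏ j ∈ Finset.range i, ((j : ℝ) * (l : ℝ) + 1)

/-- I(a,b) = (2/l^{(a+1)/2})·Γ((a+1)/2)·Γ((b+1)/(2l))/Γ((a+1)/2 + (b+1)/(2l)),
the value of ∫_0^Ω Sn^a Cs^b dθ for even a, b. -/
noncomputable def Ii (l a b : ℕ) : ℝ :=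
  2 / (l : ℝ) ^ (((a : ℝ) + 1) / 2) * Real.Gamma (((a : ℝ) + 1) / 2) *
    Real.Gamma (((b : ℝ) + 1) / (2 * (l : ℝ))) /
    Real.Gamma (((a : ℝ) + 1) / 2 + ((b : ℝ) + 1) / (2 * (l : ℝ)))

/-!
Everything is compared with `c₂⁰`. Each `I(a, b)` is `2 l^{-x}` times the Beta value
`Γ(x) Γ(y) / Γ(x + y)` with `x = (a+1)/2`, `y = (b+1)/(2l)`, so raising `a` by 2 or `b` by `2l`
multiplies it by an explicit rational factor. With `s = 3/(2l)` this gives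

* `c₁⁰ / c₂⁰ = l (m*)² ∏_{j ≤ 2k} (jl+1)/(j+1) · (s+j)/(k+3/2+s+j)`; grouping the factors `j` and
  `j + k` with the `j`-th factor `(2j+1)/(2jl+1)` of `(m*)²`, each group is at most `1/3` and the
  factor `j = 0` contributes at most `3/5`, so `c₁⁰ ≤ c₂⁰/5`;
* `b₂¹ / c₂⁰ = (2kl+3)/(2kl+3l+3) · ∏_{j<k} (2jl+3)/(2(j+1)l+1)`, which decreases in `k` from
  `1/(l+1)`, so `b₂¹ ≤ c₂⁰/3`;
* `b₂^{i+1} ≤ (2i+1)/(2i+5) · b₂^i` and `b₂² ≤ (9/28) b₂¹`; then `∑_{2 ≤ i < n} b₂^i + (n+3/2) b₂^n`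
  is nonincreasing in `n`, whence `∑ b₂^i ≤ (17/8) b₂¹ ≤ (17/24) c₂⁰`.

Since `1/5 + 17/24 < 1`, the claim follows.
-/

open Finset Real

lemma prod_range_two_mul_add_one {M : Type*} [CommMonoid M] (f : ℕ → M) (k : ℕ) :
    ∏ j ∈ range (2 * k + 1), f j = f 0 * ∏ j ∈ range k, (f (j + 1) * f (j + k + 1)) := by
  rw [prod_range_succ', two_mul, prod_range_add, prod_mul_distrib, mul_comm]
  simp only [add_comm k]

lemma sum_Ico_add_le_of_ratio_le {b : ℕ → ℝ} {m : ℕ}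
    (hb : ∀ i, m ≤ i → b (i + 1) ≤ (2 * i + 1) / (2 * i + 5) * b i) {n : ℕ} (hmn : m ≤ n) :
    ∑ i ∈ Ico m n, b i + (2 * n + 3) / 2 * b n ≤ (2 * m + 3) / 2 * b m := by
  induction n, hmn using Nat.le_induction with
  | base => simp
  | succ n hmn ih =>
    have hstep : (2 * ((n + 1 : ℕ) : ℝ) + 3) / 2 * b (n + 1) ≤ (2 * n + 1) / 2 * b n := by
      calc _ ≤ (2 * ((n + 1 : ℕ) : ℝ) + 3) / 2 * ((2 * n + 1) / (2 * n + 5) * b n) :=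
            mul_le_mul_of_nonneg_left (hb n hmn) (by positivity)
        _ = (2 * n + 1) / 2 * b n := by push_cast; field_simp; ring
    rw [sum_Ico_succ_top hmn]
    linarith

lemma mul_prod_le_inv_add_one {L : ℝ} (hL : 2 ≤ L) (k : ℕ) :
    (2 * k * L + 3) / (2 * k * L + 3 * L + 3) *
      ∏ j ∈ range k, (2 * (j : ℝ) * L + 3) / (2 * (j + 1) * L + 1) ≤ 1 / (L + 1) := by
  induction k with
  | zero =>
    rw [prod_range_zero, mul_one, div_le_div_iff₀ (by positivity) (by positivity)]
    push_cast
    linarith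
  | succ k ih =>
    have hstep : (2 * (k + 1 : ℕ) * L + 3) / (2 * (k + 1 : ℕ) * L + 3 * L + 3) *
        ((2 * k * L + 3) / (2 * (k + 1) * L + 1)) ≤ (2 * k * L + 3) / (2 * k * L + 3 * L + 3) := by
      push_cast
      rw [← mul_div_mul_comm, div_le_div_iff₀ (by positivity) (by positivity)]
      have hk : 0 ≤ (k : ℝ) := k.cast_nonneg
      have key : (2 * (k + 1) * L + 3) * (2 * k * L + 3 * L + 3) ≤
          (2 * (k + 1) * L + 3 * L + 3) * (2 * (k + 1) * L + 1) := by
        nlinarith [mul_nonneg hk (mul_nonneg (by linarith : (0 : ℝ) ≤ L) (sub_nonneg.2 hL))]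
      nlinarith [mul_le_mul_of_nonneg_left key (by positivity : 0 ≤ 2 * (k : ℝ) * L + 3)]
    calc _ = (2 * (k + 1 : ℕ) * L + 3) / (2 * (k + 1 : ℕ) * L + 3 * L + 3) *
          ((2 * k * L + 3) / (2 * (k + 1) * L + 1)) *
            ∏ j ∈ range k, (2 * (j : ℝ) * L + 3) / (2 * (j + 1) * L + 1) := by
          rw [prod_range_succ]; ring
      _ ≤ (2 * k * L + 3) / (2 * k * L + 3 * L + 3) *
            ∏ j ∈ range k, (2 * (j : ℝ) * L + 3) / (2 * (j + 1) * L + 1) :=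
          mul_le_mul_of_nonneg_right hstep (prod_nonneg fun j _ => by positivity)
      _ ≤ 1 / (L + 1) := ih

lemma pair_factor_poly_le {j k : ℝ} (hj : 1 ≤ j) (hjk : j ≤ k) :
    3 * (2 * j + 1) ^ 3 * (j + k) * (4 * j + 3) ≤
      2 * j * (4 * j + 1) * (j + 1) * (2 * j + 2 * k + 3) * (2 * j + 4 * k + 3) := by
  nlinarith [sq_nonneg (k - j), sq_nonneg j, sq_nonneg k,
    mul_nonneg (sub_nonneg.2 hjk) (sub_nonneg.2 hj),
    mul_nonneg (mul_nonneg (sub_nonneg.2 hjk) (sub_nonneg.2 hj)) (sub_nonneg.2 hj),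
    sq_nonneg ((k - j) * j), mul_nonneg (sub_nonneg.2 hjk) (sq_nonneg j)]

lemma pair_factor_le {j k L s : ℝ} (hj : 1 ≤ j) (hjk : j ≤ k) (hL : 2 ≤ L) (hs : 0 < s)
    (hs' : s ≤ 3 / 4) :
    ((2 * j + 1) / (2 * j * L + 1)) ^ 2 * ((j * L + 1) / (j + 1) * ((s + j) / (k + 3 / 2 + s + j)) *
      (((j + k) * L + 1) / (j + k + 1) * ((s + (j + k)) / (k + 3 / 2 + s + (j + k))))) ≤ 1 / 3 := by
  have hk : 1 ≤ k := hj.trans hjk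
  have hd : 0 < 2 * j * L + 1 := by nlinarith
  have h₁ : (j * L + 1) / (2 * j * L + 1) ≤ (2 * j + 1) / (4 * j + 1) := by
    rw [div_le_div_iff₀ hd (by positivity)]; nlinarith
  have h₂ : ((j + k) * L + 1) / (2 * j * L + 1) ≤ (j + k) / (2 * j) := by
    rw [div_le_div_iff₀ hd (by positivity)]; nlinarith
  have h₃ : (s + j) / (k + 3 / 2 + s + j) ≤ (j + 3 / 4) / (j + k + 3 / 2) := by
    rw [div_le_div_iff₀ (by linarith) (by linarith)]; nlinarith
  have h₄ : (s + (j + k)) / (j + k + 1) ≤ 1 := by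
    rw [div_le_one (by linarith)]; linarith
  have h₅ : 1 / (k + 3 / 2 + s + (j + k)) ≤ 1 / (j + 2 * k + 3 / 2) :=
    one_div_le_one_div_of_le (by linarith) (by linarith)
  calc _ = (j * L + 1) / (2 * j * L + 1) * (((j + k) * L + 1) / (2 * j * L + 1)) *
        ((s + j) / (k + 3 / 2 + s + j)) * ((s + (j + k)) / (j + k + 1)) *
        ((2 * j + 1) ^ 2 / (j + 1)) * (1 / (k + 3 / 2 + s + (j + k))) := by
        field_simp
    _ ≤ (2 * j + 1) / (4 * j + 1) * ((j + k) / (2 * j)) * ((j + 3 / 4) / (j + k + 3 / 2)) * 1 *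
        ((2 * j + 1) ^ 2 / (j + 1)) * (1 / (j + 2 * k + 3 / 2)) := by
        gcongr ?_ * ?_ * ?_ * ?_ * ?_ * ?_
    _ = 3 * (2 * j + 1) ^ 3 * (j + k) * (4 * j + 3) /
        (3 * (2 * j * (4 * j + 1) * (j + 1) * (2 * j + 2 * k + 3) * (2 * j + 4 * k + 3))) := by
        field_simp
        ring
    _ ≤ 1 / 3 := by
        rw [div_le_div_iff₀ (by positivity) (by norm_num)]
        linarith [pair_factor_poly_le hj hjk]

lemma Ii_pos {l : ℕ} (hl : 0 < l) (a b : ℕ) : 0 < Ii l a b := by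
  unfold Ii
  have := Gamma_pos_of_pos (s := ((a : ℝ) + 1) / 2) (by positivity)
  have := Gamma_pos_of_pos (s := ((b : ℝ) + 1) / (2 * l)) (by positivity)
  have := Gamma_pos_of_pos (s := ((a : ℝ) + 1) / 2 + ((b : ℝ) + 1) / (2 * l)) (by positivity)
  positivity

section Shift

variable {l a b : ℕ} {x y : ℝ}

lemma Ii_add_two_left (hl : 0 < l) (hx : ((a : ℝ) + 1) / 2 = x)
    (hy : ((b : ℝ) + 1) / (2 * l) = y) :
    Ii l (a + 2) b = Ii l a b * (x / (l * (x + y))) := by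
  have hx0 : 0 < x := hx ▸ by positivity
  have hy0 : 0 < y := hy ▸ by positivity
  have hx' : ((a + 2 : ℕ) + 1 : ℝ) / 2 = x + 1 := by push_cast; linarith
  have := Gamma_pos_of_pos hy0
  have := Gamma_pos_of_pos (add_pos hx0 hy0)
  unfold Ii
  rw [hx', hx, hy, add_right_comm, Gamma_add_one (by positivity), Gamma_add_one (by positivity),
    rpow_add_one (by positivity)]
  field_simp

lemma Ii_add_right (hl : 0 < l) (hx : ((a : ℝ) + 1) / 2 = x)
    (hy : ((b : ℝ) + 1) / (2 * l) = y) :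
    Ii l a (b + 2 * l) = Ii l a b * (y / (x + y)) := by
  have hx0 : 0 < x := hx ▸ by positivity
  have hy0 : 0 < y := hy ▸ by positivity
  have hy' : ((b + 2 * l : ℕ) + 1 : ℝ) / (2 * l) = y + 1 := by
    rw [← hy]; push_cast; field_simp; ring
  have := Gamma_pos_of_pos hx0
  have := Gamma_pos_of_pos (add_pos hx0 hy0)
  unfold Ii
  rw [hy', hx, hy, ← add_assoc, Gamma_add_one (by positivity), Gamma_add_one (by positivity)]
  field_simp

lemma Ii_add_two_mul_left (hl : 0 < l) (hx : ((a : ℝ) + 1) / 2 = x)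
    (hy : ((b : ℝ) + 1) / (2 * l) = y) (n : ℕ) :
    Ii l (a + 2 * n) b = Ii l a b * ∏ j ∈ range n, (x + j) / (l * (x + y + j)) := by
  induction n with
  | zero => simp
  | succ n ih =>
    rw [mul_add_one, ← add_assoc, Ii_add_two_left hl (x := x + n) (by push_cast; linarith) hy, ih,
      prod_range_succ]
    ring

lemma Ii_add_mul_right (hl : 0 < l) (hx : ((a : ℝ) + 1) / 2 = x)
    (hy : ((b : ℝ) + 1) / (2 * l) = y) (n : ℕ) :
    Ii l a (b + 2 * n * l) = Ii l a b * ∏ j ∈ range n, (y + j) / (x + y + j) := by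
  induction n with
  | zero => simp
  | succ n ih =>
    have hyn : ((b + 2 * n * l : ℕ) + 1 : ℝ) / (2 * l) = y + n := by
      rw [← hy]; push_cast; field_simp; ring
    rw [show b + 2 * (n + 1) * l = b + 2 * n * l + 2 * l by ring, Ii_add_right hl hx hyn, ih,
      prod_range_succ]
    ring

end Shift

lemma Pp_pos (l n : ℕ) : 0 < Pp l n := prod_pos fun _ _ => by positivity

lemma Pp_zero (l : ℕ) : Pp l 0 = 1 := prod_range_zero _

lemma Pp_succ (l n : ℕ) : Pp l (n + 1) = Pp l n * (n * l + 1) := prod_range_succ _ _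

lemma Pp_div_factorial (l n : ℕ) :
    Pp l n / n.factorial = ∏ j ∈ range n, ((j : ℝ) * l + 1) / (j + 1) := by
  rw [Pp, ← prod_range_add_one_eq_factorial, Nat.cast_prod, ← prod_div_distrib]
  push_cast
  rfl

lemma mStar_pos (l k : ℕ) : 0 < mStar l k := prod_pos fun _ _ => by positivity

lemma mStar_eq_prod_range (l k : ℕ) :
    mStar l k = ∏ j ∈ range k, (2 * (j : ℝ) + 3) / (2 * (j + 1) * l + 1) := by
  rw [mStar, prod_range_succ']
  simp only [Nat.cast_zero, mul_zero, zero_mul, zero_add, div_one, mul_one]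
  exact prod_congr rfl fun j _ => by push_cast; ring_nf

lemma mul_mStar_sq_mul_prod_le {l k : ℕ} (hl : 2 ≤ l) (hk : 1 ≤ k) :
    l * mStar l k ^ 2 * ∏ j ∈ range (2 * k + 1),
      ((j : ℝ) * l + 1) / (j + 1) * ((3 / (2 * l) + j) / (k + 3 / 2 + 3 / (2 * l) + j)) ≤
      1 / 5 := by
  have hL : (2 : ℝ) ≤ l := by exact_mod_cast hl
  have hk' : (1 : ℝ) ≤ k := by exact_mod_cast hk
  have hs : (0 : ℝ) < 3 / (2 * l) := by positivity
  have hs' : 3 / (2 * l) ≤ (3 / 4 : ℝ) := by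
    rw [div_le_div_iff₀ (by positivity) (by positivity)]; linarith
  set g : ℕ → ℝ := fun j =>
    ((j : ℝ) * l + 1) / (j + 1) * ((3 / (2 * l) + j) / (k + 3 / 2 + 3 / (2 * l) + j)) with hg
  set u : ℕ → ℝ := fun j => (2 * (j : ℝ) + 3) / (2 * (j + 1) * l + 1) with hu
  have hfirst : l * g 0 ≤ 3 / 5 := by
    simp only [hg, Nat.cast_zero, zero_mul, zero_add, div_one, one_mul, add_zero]
    rw [mul_div_assoc', div_le_div_iff₀ (by positivity) (by positivity)]
    field_simp
    nlinarith
  have hpair : ∀ j ∈ range k, u j ^ 2 * (g (j + 1) * g (j + k + 1)) ≤ 1 / 3 := by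
    intro j hj
    have hjk : (j : ℝ) + 1 ≤ k := by exact_mod_cast mem_range.mp hj
    convert pair_factor_le (j := (j : ℝ) + 1) (by linarith [j.cast_nonneg (α := ℝ)]) hjk hL hs hs'
      using 3 <;> simp only [hu, hg] <;> push_cast <;> ring
  have hg0 : ∀ j, 0 ≤ g j := fun j => by simp only [hg]; positivity
  have hpairs : ∏ j ∈ range k, u j ^ 2 * (g (j + 1) * g (j + k + 1)) ≤ 1 / 3 :=
    calc _ ≤ ∏ _j ∈ range k, (1 / 3 : ℝ) :=
          prod_le_prod (fun j _ => mul_nonneg (sq_nonneg _) (mul_nonneg (hg0 _) (hg0 _))) hpair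
      _ = (1 / 3) ^ k := by rw [prod_const, card_range]
      _ ≤ 1 / 3 := pow_le_of_le_one (by norm_num) (by norm_num) (by omega)
  have hm : mStar l k ^ 2 = ∏ j ∈ range k, u j ^ 2 := by rw [mStar_eq_prod_range, prod_pow]
  rw [hm, prod_range_two_mul_add_one g k]
  calc _ = l * g 0 * ∏ j ∈ range k, u j ^ 2 * (g (j + 1) * g (j + k + 1)) := by
        simp only [prod_mul_distrib]; ring
    _ ≤ 3 / 5 * (1 / 3) :=
        mul_le_mul hfirst hpairs (prod_nonneg fun j _ => by positivity) (by norm_num)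
    _ = 1 / 5 := by norm_num

lemma Dd_pos (l k : ℕ) : 0 < Dd l k := by unfold Dd; positivity

/-- The paper's `c₁⁰`; `b2` and `c2` below are `b₂ⁱ` and `c₂⁰`. -/
noncomputable def c1 (l k : ℕ) : ℝ :=
  l * mStar l k ^ 2 / Dd l k * Ii l (2 * k + 2) (2 * (2 * k + 1) * l + 2)

noncomputable def b2 (l k i : ℕ) : ℝ :=
  mStar l k / Dd l k * ((Nat.factorial (2 * k + 1) : ℝ) / Pp l (2 * k + 1)) *
    (Pp l i / (Nat.factorial i : ℝ)) * Ii l (2 * i) (2 * (k + 1) * l + 2)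

noncomputable def c2 (l k : ℕ) : ℝ :=
  1 / Dd l k * ((Nat.factorial (2 * k + 1) : ℝ) / Pp l (2 * k + 1)) * Pp l 0 *
    Ii l (2 * k + 2) 2

lemma c2_pos {l : ℕ} (hl : 0 < l) (k : ℕ) : 0 < c2 l k := by
  have := Ii_pos hl (2 * k + 2) 2
  have := Pp_pos l (2 * k + 1)
  have := Dd_pos l k
  unfold c2
  rw [Pp_zero]
  positivity

lemma b2_nonneg {l : ℕ} (hl : 0 < l) (k i : ℕ) : 0 ≤ b2 l k i := by
  have := Ii_pos hl (2 * i) (2 * (k + 1) * l + 2)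
  have := Pp_pos l (2 * k + 1)
  have := Pp_pos l i
  have := mStar_pos l k
  have := Dd_pos l k
  unfold b2
  positivity

lemma b2_succ {l : ℕ} (hl : 0 < l) (k i : ℕ) :
    b2 l k (i + 1) = b2 l k i * ((i * l + 1) / (l * (i + 1)) *
      ((i + 1 / 2) / (i + 1 / 2 + (k + 1 + 3 / (2 * l))))) := by
  have hIi := Ii_add_two_left (a := 2 * i) (b := 2 * (k + 1) * l + 2) (x := i + 1 / 2)
    (y := k + 1 + 3 / (2 * l)) hl (by push_cast; ring) (by push_cast; field_simp; ring)
  have := Pp_pos l i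
  unfold b2
  rw [mul_add_one, hIi, Pp_succ l i, Nat.factorial_succ i]
  push_cast
  field_simp

lemma c1_eq {l : ℕ} (hl : 0 < l) (k : ℕ) :
    c1 l k = c2 l k * (l * mStar l k ^ 2 * ∏ j ∈ range (2 * k + 1),
      ((j : ℝ) * l + 1) / (j + 1) * ((3 / (2 * l) + j) / (k + 3 / 2 + 3 / (2 * l) + j))) := by
  have hIi := Ii_add_mul_right (a := 2 * k + 2) (b := 2) (x := k + 3 / 2) (y := 3 / (2 * l)) hl
    (by push_cast; ring) (by push_cast; ring) (2 * k + 1)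
  have := Pp_pos l (2 * k + 1)
  rw [prod_mul_distrib, ← Pp_div_factorial]
  unfold c1 c2
  rw [show 2 * (2 * k + 1) * l + 2 = 2 + 2 * (2 * k + 1) * l by ring, hIi, Pp_zero]
  simp only [prod_div_distrib, add_assoc]
  field_simp

lemma b2_one_eq {l : ℕ} (hl : 0 < l) (k : ℕ) :
    b2 l k 1 = c2 l k * ((2 * k * l + 3) / (2 * k * l + 3 * l + 3) *
      ∏ j ∈ range k, (2 * (j : ℝ) * l + 3) / (2 * (j + 1) * l + 1)) := by
  set s : ℝ := 3 / (2 * l) with hs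
  have hl' : (0 : ℝ) < l := by exact_mod_cast hl
  have hb2 := Ii_add_mul_right (a := 2) (b := 2) (x := 3 / 2) (y := s) hl
    (by norm_num) (by push_cast; ring) (k + 1)
  have hc2 := Ii_add_two_mul_left (a := 2) (b := 2) (x := 3 / 2) (y := s) hl
    (by norm_num) (by push_cast; ring) k
  have hprod : mStar l k * ∏ j ∈ range k, (s + j) / (3 / 2 + s + j) =
      (∏ j ∈ range k, (3 / 2 + j) / (l * (3 / 2 + s + j))) *
        ∏ j ∈ range k, (2 * (j : ℝ) * l + 3) / (2 * (j + 1) * l + 1) := by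
    rw [mStar_eq_prod_range, ← prod_mul_distrib, ← prod_mul_distrib]
    refine prod_congr rfl fun j _ => ?_
    rw [hs]
    field_simp
    ring
  have hlast : (s + k) / (3 / 2 + s + k) = (2 * k * l + 3) / (2 * k * l + 3 * l + 3) := by
    rw [hs]
    field_simp
    ring
  unfold b2 c2
  rw [show 2 * (k + 1) * l + 2 = 2 + 2 * (k + 1) * l by ring, hb2,
    show 2 * k + 2 = 2 + 2 * k by ring, hc2, prod_range_succ, hlast, Pp_zero,
    show Pp l 1 = 1 by simp [Pp]]
  simp only [mul_one, Nat.factorial_one, Nat.cast_one, div_one]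
  linear_combination (1 / Dd l k * ((Nat.factorial (2 * k + 1) : ℝ) / Pp l (2 * k + 1)) *
    Ii l 2 2 * ((2 * k * l + 3) / (2 * k * l + 3 * l + 3))) * hprod

lemma c1_le {l k : ℕ} (hl : 2 ≤ l) (hk : 1 ≤ k) : c1 l k ≤ c2 l k / 5 := by
  rw [c1_eq (by omega)]
  calc _ ≤ c2 l k * (1 / 5) :=
        mul_le_mul_of_nonneg_left (mul_mStar_sq_mul_prod_le hl hk) (c2_pos (by omega) k).le
    _ = c2 l k / 5 := by ring

lemma b2_one_le {l : ℕ} (hl : 2 ≤ l) (k : ℕ) : b2 l k 1 ≤ c2 l k / 3 := by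
  have hL : (2 : ℝ) ≤ l := by exact_mod_cast hl
  rw [b2_one_eq (by omega)]
  calc _ ≤ c2 l k * (1 / (l + 1)) :=
        mul_le_mul_of_nonneg_left (mul_prod_le_inv_add_one hL k) (c2_pos (by omega) k).le
    _ ≤ c2 l k * (1 / 3) := by
        gcongr
        · exact (c2_pos (by omega) k).le
        · linarith
    _ = c2 l k / 3 := by ring

lemma b2_succ_le {l k : ℕ} (hl : 0 < l) (hk : 1 ≤ k) (i : ℕ) :
    b2 l k (i + 1) ≤ (2 * i + 1) / (2 * i + 5) * b2 l k i := by
  have hL : (1 : ℝ) ≤ l := by exact_mod_cast hl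
  have hk' : (1 : ℝ) ≤ k := by exact_mod_cast hk
  have h₁ : ((i : ℝ) * l + 1) / (l * (i + 1)) ≤ 1 := by
    rw [div_le_one (by positivity)]; linarith
  have h₂ : ((i : ℝ) + 1 / 2) / (i + 1 / 2 + (k + 1 + 3 / (2 * l))) ≤
      (2 * i + 1) / (2 * i + 5) := by
    rw [div_le_div_iff₀ (by positivity) (by positivity)]
    nlinarith [(by positivity : (0 : ℝ) ≤ 3 / (2 * l))]
  rw [b2_succ hl, mul_comm _ (b2 l k i)]
  exact mul_le_mul_of_nonneg_left
    (by simpa using mul_le_mul h₁ h₂ (by positivity) zero_le_one) (b2_nonneg hl k i)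

lemma b2_two_le {l k : ℕ} (hl : 2 ≤ l) (hk : 1 ≤ k) : b2 l k 2 ≤ 9 / 28 * b2 l k 1 := by
  have hL : (2 : ℝ) ≤ l := by exact_mod_cast hl
  have hk' : (1 : ℝ) ≤ k := by exact_mod_cast hk
  have h₁ : ((1 : ℕ) * (l : ℝ) + 1) / (l * ((1 : ℕ) + 1)) ≤ 3 / 4 := by
    rw [div_le_div_iff₀ (by positivity) (by positivity)]; push_cast; linarith
  have h₂ : (((1 : ℕ) : ℝ) + 1 / 2) / ((1 : ℕ) + 1 / 2 + (k + 1 + 3 / (2 * l))) ≤ 3 / 7 := by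
    rw [div_le_div_iff₀ (by positivity) (by positivity)]
    nlinarith [(by positivity : (0 : ℝ) ≤ 3 / (2 * l))]
  rw [b2_succ (by omega) k 1]
  calc _ ≤ b2 l k 1 * (3 / 4 * (3 / 7)) :=
        mul_le_mul_of_nonneg_left (mul_le_mul h₁ h₂ (by positivity) (by norm_num))
          (b2_nonneg (by omega) k 1)
    _ = 9 / 28 * b2 l k 1 := by ring

lemma sum_b2_le {l k : ℕ} (hl : 2 ≤ l) (hk : 1 ≤ k) :
    ∑ i ∈ Icc 1 (2 * k + 1), b2 l k i ≤ 17 / 8 * b2 l k 1 := by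
  have htail := sum_Ico_add_le_of_ratio_le (b := b2 l k) (m := 1 + 1)
    (fun i _ => b2_succ_le (by omega) hk i) (n := 2 * k + 1 + 1) (by omega)
  have hlast : 0 ≤ (2 * ((2 * k + 1 + 1 : ℕ) : ℝ) + 3) / 2 * b2 l k (2 * k + 1 + 1) :=
    mul_nonneg (by positivity) (b2_nonneg (by omega) k _)
  have htwo := b2_two_le hl hk
  rw [← Ico_add_one_right_eq_Icc, sum_eq_sum_Ico_succ_bot (by omega)]
  norm_num at htail htwo hlast ⊢
  linarith

/-- Proposition 3.2 (iii): −c₁⁰ − ∑_{i=1}^{2k+1} b₂ⁱ + c₂⁰ > 0. -/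
theorem neg_c1_sub_sum_b2_add_c2_pos (l k : ℕ) (hl : 2 ≤ l) (hk : 1 ≤ k) :
    0 < -((l : ℝ) * mStar l k ^ 2 / Dd l k * Ii l (2 * k + 2) (2 * (2 * k + 1) * l + 2)) -
        (∑ i ∈ Finset.Icc 1 (2 * k + 1),
          mStar l k / Dd l k * ((Nat.factorial (2 * k + 1) : ℝ) / Pp l (2 * k + 1)) *
            (Pp l i / (Nat.factorial i : ℝ)) * Ii l (2 * i) (2 * (k + 1) * l + 2)) +
        1 / Dd l k * ((Nat.factorial (2 * k + 1) : ℝ) / Pp l (2 * k + 1)) * Pp l 0 *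
          Ii l (2 * k + 2) 2 := by
  change 0 < -c1 l k - ∑ i ∈ Icc 1 (2 * k + 1), b2 l k i + c2 l k
  have hc1 := c1_le hl hk
  have hsum := sum_b2_le hl hk
  have hb1 := b2_one_le hl k
  have hc2 := c2_pos (by omega : 0 < l) k
  linarith
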